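/- arXiv:2308.08508 — 5 statements merged into one kernel-verified Lean document; each statement's English description precedes it below -/
import Mathlib

section
/- A complete Boolean algebra B is atomic if and only if every maximal chain in B is weakly atomic in its induced order; that is, B is atomic if and only if for every maximal chain C ⊆ B and all x, y ∈ C with x < y there exist a, b ∈ C with x ≤ a, b ≤ y, a < b, and no element of C strictly between a and b. -/
/-!
Covers in a maximal chain are covers in the whole order, and in a Boolean algebra `b \ a`
is an atom whenever `a ⋖ b`; so a cover below `x` in a maximal chain through `⊥` and `x`
yields an atom below `x`. Conversely, given `x < y` in a maximal chain `C` and an atom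
`p ≤ y \ x`, the chain splits into the elements above `p` and the rest. Maximal
chains are closed under arbitrary joins and meets, and an atom of a frame lies below a join
only if it lies below one of its terms, so the join of the rest is still not above `p`
and is covered in `C` by the meet of the elements above `p`.
-/

namespace IsMaxChain

variable {α : Type*}

theorem mem_of_forall_le_or_le [LE α] {C : Set α} (hC : IsMaxChain (· ≤ ·) C) {x : α}
    (hx : ∀ c ∈ C, x ≤ c ∨ c ≤ x) : x ∈ C := by
  rw [hC.2 (hC.1.insert fun c hc _ => hx c hc) (Set.subset_insert x C)]
  exact Set.mem_insert x C

theorem sSup_mem [CompleteLattice α] {C S : Set α} (hC : IsMaxChain (· ≤ ·) C)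
    (hS : S ⊆ C) : sSup S ∈ C :=
  hC.mem_of_forall_le_or_le fun c hc => by
    by_cases h : ∀ s ∈ S, s ≤ c
    · exact Or.inl (sSup_le h)
    · push Not at h
      obtain ⟨s, hs, hsc⟩ := h
      exact Or.inr (((hC.1.total hc (hS hs)).resolve_right hsc).trans (le_sSup hs))

theorem sInf_mem [CompleteLattice α] {C S : Set α} (hC : IsMaxChain (· ≤ ·) C)
    (hS : S ⊆ C) : sInf S ∈ C :=
  sSup_mem (α := αᵒᵈ) hC.symm hS

theorem covBy_of_forall_mem_not_between [Preorder α] {C : Set α} (hC : IsMaxChain (· ≤ ·) C)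
    {a b : α} (ha : a ∈ C) (hb : b ∈ C) (hab : a < b)
    (hgap : ∀ c ∈ C, ¬ (a < c ∧ c < b)) : a ⋖ b := by
  refine ⟨hab, fun e hae heb => hgap e (hC.mem_of_forall_le_or_le fun c hc => ?_) ⟨hae, heb⟩⟩
  by_cases hca : c ≤ a
  · exact Or.inr (hca.trans hae.le)
  by_cases hbc : b ≤ c
  · exact Or.inl (heb.le.trans hbc)
  exact (hgap c hc ⟨((hC.1.total ha hc).resolve_right hca).lt_of_not_ge hca,
    ((hC.1.total hc hb).resolve_right hbc).lt_of_not_ge hbc⟩).elim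

theorem exists_gap_of_isAtom [Order.Frame α] {C : Set α} (hC : IsMaxChain (· ≤ ·) C)
    {p x y : α} (hp : IsAtom p) (hx : x ∈ C) (hy : y ∈ C) (hpx : ¬ p ≤ x) (hpy : p ≤ y) :
    ∃ a ∈ C, ∃ b ∈ C, x ≤ a ∧ b ≤ y ∧ a < b ∧ ∀ c ∈ C, ¬ (a < c ∧ c < b) := by
  set a := sSup {c ∈ C | ¬ p ≤ c}
  set b := sInf {c ∈ C | p ≤ c}
  have hpa : ¬ p ≤ a := by simp [a, hp.le_sSup]
  have hpb : p ≤ b := le_sInf fun c hc => hc.2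
  have haC : a ∈ C := hC.sSup_mem (Set.sep_subset C _)
  have hbC : b ∈ C := hC.sInf_mem (Set.sep_subset C _)
  have hab : a < b := ((hC.1.total haC hbC).resolve_right fun hba => hpa (hpb.trans hba))
    |>.lt_of_ne fun h => hpa (h ▸ hpb)
  refine ⟨a, haC, b, hbC, le_sSup ⟨hx, hpx⟩, sInf_le ⟨hy, hpy⟩, hab, fun c hc ⟨hac, hcb⟩ => ?_⟩
  by_cases hpc : p ≤ c
  · exact hcb.not_ge (sInf_le ⟨hc, hpc⟩)
  · exact hac.not_ge (le_sSup ⟨hc, hpc⟩)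

end IsMaxChain

theorem CovBy.isAtom_sdiff {α : Type*} [GeneralizedBooleanAlgebra α] {a b : α} (h : a ⋖ b) :
    IsAtom (b \ a) := by
  have hcov : a ⋖ a ⊔ b \ a := by rwa [sup_sdiff_self_right, sup_eq_right.2 h.le]
  simpa using inf_covBy_of_covBy_sup_left hcov

/-- A complete Boolean algebra is atomic iff every maximal chain in it is
weakly atomic in its induced order. -/
theorem completeBooleanAlgebra_atomic_iff_maxChains_weaklyAtomic {B : Type*}
    [CompleteBooleanAlgebra B] :
    (∀ x : B, x ≠ ⊥ → ∃ a : B, IsAtom a ∧ a ≤ x) ↔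
      (∀ C : Set B, IsMaxChain (· ≤ ·) C →
        ∀ x ∈ C, ∀ y ∈ C, x < y →
          ∃ a ∈ C, ∃ b ∈ C, x ≤ a ∧ b ≤ y ∧ a < b ∧ ∀ c ∈ C, ¬ (a < c ∧ c < b)) := by
  constructor
  · intro hatomic C hC x hx y hy hxy
    obtain ⟨p, hp, hpyx⟩ := hatomic (y \ x) (sdiff_eq_bot_iff.not.2 hxy.not_ge)
    exact hC.exists_gap_of_isAtom hp hx hy
      (fun hpx => hp.1 ((Disjoint.mono_left hpyx disjoint_sdiff_self_left).eq_bot_of_le hpx))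
      (hpyx.trans sdiff_le)
  · intro hweak x hx
    obtain ⟨C, hC, hxC⟩ := (IsChain.singleton (r := (· ≤ ·)) (a := x)).exists_maxChain
    obtain ⟨a, haC, b, hbC, -, hbx, hab, hgap⟩ :=
      hweak C hC ⊥ hC.bot_mem x (hxC rfl) hx.bot_lt
    exact ⟨b \ a, (hC.covBy_of_forall_mem_not_between haC hbC hab hgap).isAtom_sdiff,
      sdiff_le.trans hbx⟩
end

section
/- Let L be a complete OML. If every maximal chain in L is weakly atomic in its induced order, then every complete subalgebra of L is atomic; i.e., for every subset S of L closed under the orthocomplementation and under arbitrary suprema and infima computed in L, every element of S other than ⊥ has an element of S that is an atom of the poset S below it. -/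
/-- A complete orthomodular lattice: a complete lattice with an orthocomplementation
`x ↦ xᶜ` satisfying the orthomodular law. -/
class CompleteOML (α : Type*) extends CompleteLattice α, Compl α where
  compl_compl : ∀ x : α, xᶜᶜ = x
  compl_antitone : ∀ x y : α, x ≤ y → yᶜ ≤ xᶜ
  inf_compl : ∀ x : α, x ⊓ xᶜ = ⊥
  sup_compl : ∀ x : α, x ⊔ xᶜ = ⊤
  orthomodular : ∀ x y : α, x ≤ y → x ⊔ (xᶜ ⊓ y) = y

/-- A complete subalgebra of a complete OML: a subset closed under the
orthocomplementation and under arbitrary suprema and infima computed in the ambient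
lattice. -/
def CompleteSubalgebra {α : Type*} [CompleteLattice α] [Compl α] (S : Set α) : Prop :=
  (∀ x ∈ S, xᶜ ∈ S) ∧ (∀ T : Set α, T ⊆ S → sSup T ∈ S) ∧ (∀ T : Set α, T ⊆ S → sInf T ∈ S)

/-- A subset `S` (viewed as a poset with least element `⊥`) is atomic: every member
other than `⊥` has below it a member of `S` that is an atom of the poset `S`. -/
def AtomicSubset {α : Type*} [CompleteLattice α] (S : Set α) : Prop :=
  ∀ x ∈ S, x ≠ ⊥ → ∃ a ∈ S, a ≠ ⊥ ∧ (∀ s ∈ S, ¬ (⊥ < s ∧ s < a)) ∧ a ≤ x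

/-!
Given `x ≠ ⊥` in a complete subalgebra `S`, take a maximal chain `M` of `S` through `x` and
extend it to a maximal chain `C` of the whole lattice. Weak atomicity of `C` gives a covering
pair `a ⋖ b` of `C` below `x`; the join of the elements of `M` below `a` and the meet of those
above `b` lie in `S` and, by maximality of `M`, form a covering pair `s ⋖ t` of `S`. By
orthomodularity, `sᶜ ⊓ t` is then an atom of `S` below `x`.
-/

section Chains

variable {α : Type*}

theorem IsMaxChain.mem_of_forall_le_or_le_s2 [Preorder α] {M : Set α}
    (hM : IsMaxChain (· ≤ ·) M) {u : α} (hu : ∀ m ∈ M, m ≤ u ∨ u ≤ m) : u ∈ M :=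
  (hM.2 (hM.1.insert fun m hm _ => (hu m hm).symm) (Set.subset_insert u M)).symm ▸
    Set.mem_insert u M

theorem IsMaxChain.not_lt_lt_of_forall_le_or_le [Preorder α] {M : Set α}
    (hM : IsMaxChain (· ≤ ·) M) {s t : α} (hsplit : ∀ m ∈ M, m ≤ s ∨ t ≤ m) (u : α) :
    ¬ (s < u ∧ u < t) := by
  rintro ⟨hsu, hut⟩
  have huM : u ∈ M := hM.mem_of_forall_le_or_le_s2 fun m hm =>
    (hsplit m hm).imp (fun hms => hms.trans hsu.le) (fun htm => hut.le.trans htm)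
  rcases hsplit u huM with hus | htu
  · exact hsu.not_ge hus
  · exact hut.not_ge htu

theorem IsChain.le_sSup_or_sInf_le_of_subset [CompleteLattice α] {C C₀ : Set α}
    (hC : IsChain (· ≤ ·) C) (hC₀ : C₀ ⊆ C) {a b : α} (ha : a ∈ C) (hb : b ∈ C)
    (hab : ∀ c ∈ C, ¬ (a < c ∧ c < b)) :
    ∀ c ∈ C₀, c ≤ sSup {c ∈ C₀ | c ≤ a} ∨ sInf {c ∈ C₀ | b ≤ c} ≤ c := by
  intro c hc
  by_cases hca : c ≤ a
  · exact .inl (le_sSup ⟨hc, hca⟩)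
  by_cases hbc : b ≤ c
  · exact .inr (sInf_le ⟨hc, hbc⟩)
  have hcC := hC₀ hc
  exact absurd ⟨(hC.not_le hcC ha).1 hca, (hC.not_le hb hcC).1 hbc⟩ (hab c hcC)

theorem exists_covBy_in_subset_below [CompleteLattice α] {S : Set α}
    (h : ∀ C : Set α, IsMaxChain (· ≤ ·) C →
      ∀ x ∈ C, ∀ y ∈ C, x < y →
        ∃ a ∈ C, ∃ b ∈ C, x ≤ a ∧ b ≤ y ∧ a < b ∧ ∀ c ∈ C, ¬ (a < c ∧ c < b))
    (hsup : ∀ T ⊆ S, sSup T ∈ S) (hinf : ∀ T ⊆ S, sInf T ∈ S)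
    {x : α} (hxS : x ∈ S) (hx : x ≠ ⊥) :
    ∃ s ∈ S, ∃ t ∈ S, s < t ∧ t ≤ x ∧ ∀ u ∈ S, ¬ (s < u ∧ u < t) := by
  obtain ⟨M, hM, hxM⟩ :=
    (IsChain.singleton (r := ((· ≤ ·) : S → S → Prop)) (a := ⟨x, hxS⟩)).exists_maxChain
  set C₀ : Set α := Subtype.val '' M
  have hC₀S : C₀ ⊆ S := by
    rintro _ ⟨m, -, rfl⟩
    exact m.2
  have hxC₀ : x ∈ C₀ := ⟨_, hxM rfl, rfl⟩
  obtain ⟨C, hC, hC₀C⟩ :=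
    (hM.isChain.image_of_map_rel _ (· ≤ ·) Subtype.val fun _ _ => id).exists_maxChain
  obtain ⟨a, haC, b, hbC, -, hbx, hab, hcov⟩ :=
    h C hC ⊥ hC.bot_mem x (hC₀C hxC₀) (bot_lt_iff_ne_bot.2 hx)
  have hsplit := hC.isChain.le_sSup_or_sInf_le_of_subset hC₀C haC hbC hcov
  have hsS : sSup {c ∈ C₀ | c ≤ a} ∈ S := hsup _ fun c hc => hC₀S hc.1
  have htS : sInf {c ∈ C₀ | b ≤ c} ∈ S := hinf _ fun c hc => hC₀S hc.1
  refine ⟨_, hsS, _, htS, ?_, sInf_le ⟨hxC₀, hbx⟩, fun u hu => ?_⟩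
  · exact (sSup_le fun _ hc => hc.2).trans_lt (hab.trans_le (le_sInf fun _ hc => hc.2))
  · exact hM.not_lt_lt_of_forall_le_or_le (s := ⟨_, hsS⟩) (t := ⟨_, htS⟩)
      (fun m hm => hsplit m ⟨m, hm, rfl⟩) ⟨u, hu⟩

end Chains

namespace CompleteOML

variable {α : Type*} [CompleteOML α]

theorem compl_le_compl {x y : α} (h : x ≤ y) : yᶜ ≤ xᶜ :=
  compl_antitone x y h

theorem le_compl_comm {x y : α} : x ≤ yᶜ ↔ y ≤ xᶜ :=
  ⟨fun h => compl_compl y ▸ compl_le_compl h, fun h => compl_compl x ▸ compl_le_compl h⟩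

theorem compl_sup_eq (x y : α) : (x ⊔ y)ᶜ = xᶜ ⊓ yᶜ :=
  le_antisymm (le_inf (compl_le_compl le_sup_left) (compl_le_compl le_sup_right)) <|
    le_compl_comm.1 <| sup_le (le_compl_comm.1 inf_le_left) (le_compl_comm.1 inf_le_right)

theorem compl_inf_sup_eq_of_le_compl {s u : α} (h : u ≤ sᶜ) : sᶜ ⊓ (s ⊔ u) = u := by
  have hu : u ≤ sᶜ ⊓ (s ⊔ u) := le_inf h le_sup_right
  have hdisj : uᶜ ⊓ (sᶜ ⊓ (s ⊔ u)) = ⊥ := by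
    rw [← inf_assoc, inf_comm uᶜ, ← compl_sup_eq, inf_comm, inf_compl]
  have := orthomodular u _ hu
  rwa [hdisj, sup_bot_eq, eq_comm] at this

theorem compl_inf_ne_bot_of_lt {s t : α} (h : s < t) : sᶜ ⊓ t ≠ ⊥ := fun hp =>
  h.ne <| by simpa [hp] using orthomodular s t h.le

theorem not_bot_lt_lt_compl_inf {S : Set α} (hsup : ∀ u ∈ S, ∀ v ∈ S, u ⊔ v ∈ S)
    {s t : α} (hs : s ∈ S) (hst : s ≤ t) (hgap : ∀ u ∈ S, ¬ (s < u ∧ u < t)) :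
    ∀ u ∈ S, ¬ (⊥ < u ∧ u < sᶜ ⊓ t) := by
  rintro u hu ⟨hu0, hup⟩
  have hus : u ≤ sᶜ := hup.le.trans inf_le_left
  refine hgap (s ⊔ u) (hsup s hs u hu) ⟨left_lt_sup.2 fun hle => hu0.ne' ?_, ?_⟩
  · exact le_bot_iff.1 (inf_compl s ▸ le_inf hle hus)
  refine (sup_le hst (hup.le.trans inf_le_right)).lt_of_ne fun heq => hup.ne' ?_
  rw [← heq, compl_inf_sup_eq_of_le_compl hus]

end CompleteOML

/-- in a complete OML, if every maximal chain is weakly atomic in its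
induced order, then every complete subalgebra is atomic. -/
theorem completeSubalgebras_atomic_of_maxChains_weaklyAtomic {α : Type*} [CompleteOML α]
    (h : ∀ C : Set α, IsMaxChain (· ≤ ·) C →
      ∀ x ∈ C, ∀ y ∈ C, x < y →
        ∃ a ∈ C, ∃ b ∈ C, x ≤ a ∧ b ≤ y ∧ a < b ∧ ∀ c ∈ C, ¬ (a < c ∧ c < b)) :
    ∀ S : Set α, CompleteSubalgebra S → AtomicSubset S := by
  rintro S ⟨hcompl, hsup, hinf⟩ x hxS hx
  obtain ⟨s, hs, t, ht, hst, htx, hgap⟩ := exists_covBy_in_subset_below h hsup hinf hxS hx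
  have hsup₂ : ∀ u ∈ S, ∀ v ∈ S, u ⊔ v ∈ S := fun u hu v hv => by
    simpa only [sSup_pair] using hsup {u, v} (Set.pair_subset hu hv)
  have hp : sᶜ ⊓ t ∈ S := by
    simpa only [sInf_pair] using hinf {sᶜ, t} (Set.pair_subset (hcompl s hs) ht)
  exact ⟨sᶜ ⊓ t, hp, CompleteOML.compl_inf_ne_bot_of_lt hst,
    CompleteOML.not_bot_lt_lt_compl_inf hsup₂ hs hst.le hgap, inf_le_right.trans htx⟩
end

section
/- Let (L_i)_{i ∈ I} be a family of complete OMLs, each of which is completely hereditarily atomic. Then the product Π_{i∈I} L_i, with componentwise order and componentwise orthocomplementation, is a complete OML that is completely hereditarily atomic. -/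
namespace CompleteOML

variable {α : Type*} [CompleteOML α]

lemma compl_bot : (⊥ : α)ᶜ = ⊤ := by
  simpa using sup_compl (⊥ : α)

lemma eq_bot_of_le_compl {x : α} (h : x ≤ xᶜ) : x = ⊥ :=
  le_bot_iff.mp (inf_compl x ▸ le_inf le_rfl h)

end CompleteOML

namespace CompleteSubalgebra

section Basic

variable {α : Type*} [CompleteLattice α] [Compl α] {S : Set α}

lemma compl_mem (hS : CompleteSubalgebra S) {x : α} (hx : x ∈ S) : xᶜ ∈ S :=
  hS.1 x hx

lemma sSup_mem (hS : CompleteSubalgebra S) {T : Set α} (hT : T ⊆ S) : sSup T ∈ S :=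
  hS.2.1 T hT

lemma sInf_mem (hS : CompleteSubalgebra S) {T : Set α} (hT : T ⊆ S) : sInf T ∈ S :=
  hS.2.2 T hT

lemma inf_mem (hS : CompleteSubalgebra S) {x y : α} (hx : x ∈ S) (hy : y ∈ S) : x ⊓ y ∈ S := by
  simpa [sInf_pair] using hS.sInf_mem (Set.pair_subset hx hy)

end Basic

variable {I : Type*} {L : I → Type*}

lemma image_eval [∀ i, CompleteLattice (L i)] [∀ i, Compl (L i)] {S : Set (∀ i, L i)}
    (hS : CompleteSubalgebra S) (i : I) : CompleteSubalgebra (Function.eval i '' S) := by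
  have lift : ∀ T ⊆ Function.eval i '' S, Function.eval i '' (S ∩ Function.eval i ⁻¹' T) = T :=
    fun T hT => by rw [Set.image_inter_preimage, Set.inter_eq_right.mpr hT]
  refine ⟨?_, fun T hT => ?_, fun T hT => ?_⟩
  · rintro _ ⟨y, hy, rfl⟩
    exact ⟨yᶜ, hS.compl_mem hy, rfl⟩
  · refine ⟨sSup (S ∩ Function.eval i ⁻¹' T), hS.sSup_mem Set.inter_subset_left, ?_⟩
    simp only [Function.eval, sSup_apply_eq_sSup_image]
    exact congrArg sSup (lift T hT)
  · refine ⟨sInf (S ∩ Function.eval i ⁻¹' T), hS.sInf_mem Set.inter_subset_left, ?_⟩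
    simp only [Function.eval, sInf_apply_eq_sInf_image]
    exact congrArg sInf (lift T hT)

end CompleteSubalgebra

section LeastAbove

variable {I : Type*} {L : I → Type*}

def leastAbove [∀ i, CompleteLattice (L i)] (S : Set (∀ i, L i)) (i : I) (a : L i) : ∀ i, L i :=
  sInf {y ∈ S | a ≤ y i}

section CompleteLattice

variable [∀ i, CompleteLattice (L i)] {S : Set (∀ i, L i)} {i : I} {a : L i}

lemma leastAbove_mem [∀ i, Compl (L i)] (hS : CompleteSubalgebra S) : leastAbove S i a ∈ S :=
  hS.sInf_mem fun _ hy => hy.1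

lemma leastAbove_le {y : ∀ i, L i} (hy : y ∈ S) (hay : a ≤ y i) : leastAbove S i a ≤ y :=
  sInf_le ⟨hy, hay⟩

lemma leastAbove_apply (ha : a ∈ Function.eval i '' S) : leastAbove S i a i = a := by
  obtain ⟨z, hz, rfl⟩ := ha
  refine le_antisymm (leastAbove_le hz le_rfl i) ?_
  rw [leastAbove, sInf_apply]
  exact le_iInf fun y => y.2.2

end CompleteLattice

variable [∀ i, CompleteOML (L i)] {S : Set (∀ i, L i)} {i : I} {a : L i}

lemma leastAbove_isAtom (hS : CompleteSubalgebra S) (ha : a ∈ Function.eval i '' S)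
    (ha_ne : a ≠ ⊥) (ha_min : ∀ t ∈ Function.eval i '' S, ¬ (⊥ < t ∧ t < a)) :
    leastAbove S i a ≠ ⊥ ∧ ∀ s ∈ S, ¬ (⊥ < s ∧ s < leastAbove S i a) := by
  set b := leastAbove S i a
  have hbi : b i = a := leastAbove_apply ha
  refine ⟨fun hb => ha_ne (hbi ▸ congrFun hb i), ?_⟩
  rintro s hs ⟨hs_pos, hsb⟩
  have hsi : s i ≤ a := hbi ▸ hsb.le i
  rcases eq_or_ne (s i) ⊥ with hsi_bot | hsi_ne
  · have hcoord : a ≤ (b ⊓ sᶜ) i := by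
      change a ≤ b i ⊓ (s i)ᶜ
      rw [hbi, hsi_bot, CompleteOML.compl_bot, inf_top_eq]
    have hb_compl : b ≤ sᶜ :=
      (leastAbove_le (hS.inf_mem (leastAbove_mem hS) (hS.compl_mem hs)) hcoord).trans inf_le_right
    have hs_bot : s = ⊥ :=
      funext fun j => CompleteOML.eq_bot_of_le_compl ((hsb.le.trans hb_compl) j)
    exact hs_pos.ne' hs_bot
  · have hsi_eq : s i = a := by
      by_contra hne
      exact ha_min (s i) ⟨s, hs, rfl⟩ ⟨bot_lt_iff_ne_bot.mpr hsi_ne, hsi.lt_of_ne hne⟩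
    exact hsb.not_ge (leastAbove_le hs hsi_eq.ge)

end LeastAbove

lemma CompleteSubalgebra.atomicSubset_pi {I : Type*} {L : I → Type*} [∀ i, CompleteOML (L i)]
    {S : Set (∀ i, L i)} (hS : CompleteSubalgebra S)
    (h : ∀ i, AtomicSubset (Function.eval i '' S)) : AtomicSubset S := by
  intro x hx hx_ne
  obtain ⟨i, hxi⟩ : ∃ i, x i ≠ ⊥ := by
    by_contra! hc
    exact hx_ne (funext hc)
  obtain ⟨a, ha, ha_ne, ha_min, hax⟩ := h i (x i) ⟨x, hx, rfl⟩ hxi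
  obtain ⟨hb_ne, hb_min⟩ := leastAbove_isAtom hS ha ha_ne ha_min
  exact ⟨leastAbove S i a, leastAbove_mem hS, hb_ne, hb_min, leastAbove_le hx hax⟩

/-- the product of a family of completely hereditarily atomic complete
OMLs, with componentwise order (the product is a complete lattice by the Pi instance)
and componentwise orthocomplementation, is a complete OML that is completely
hereditarily atomic. -/
theorem pi_completeOML_completelyHereditarilyAtomic {I : Type*} {L : I → Type*}
    [∀ i, CompleteOML (L i)]
    (hcha : ∀ i, ∀ S : Set (L i), CompleteSubalgebra S → AtomicSubset S) :
    (∀ x y : ∀ i, L i, x ≤ y ↔ ∀ i, x i ≤ y i) ∧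
    (∀ (x : ∀ i, L i) (i : I), (xᶜ) i = (x i)ᶜ) ∧
    (∀ x : ∀ i, L i, xᶜᶜ = x) ∧
    (∀ x y : ∀ i, L i, x ≤ y → yᶜ ≤ xᶜ) ∧
    (∀ x : ∀ i, L i, x ⊓ xᶜ = ⊥) ∧
    (∀ x : ∀ i, L i, x ⊔ xᶜ = ⊤) ∧
    (∀ x y : ∀ i, L i, x ≤ y → x ⊔ (xᶜ ⊓ y) = y) ∧
    (∀ S : Set (∀ i, L i), CompleteSubalgebra S → AtomicSubset S) :=
  ⟨fun _ _ => Iff.rfl, fun _ _ => rfl,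
    fun x => funext fun i => CompleteOML.compl_compl (x i),
    fun _ _ h i => CompleteOML.compl_antitone _ _ (h i),
    fun x => funext fun i => CompleteOML.inf_compl (x i),
    fun x => funext fun i => CompleteOML.sup_compl (x i),
    fun _ _ h => funext fun i => CompleteOML.orthomodular _ _ (h i),
    fun _ hS => hS.atomicSubset_pi fun i => hcha i _ (hS.image_eval i)⟩
end

section
/- Let L be a complete OML and let x ≤ y in L. Then the interval [x, y], with the induced order and the orthocomplementation z ↦ x ⊔ (zᶜ ⊓ y), is a complete OML; moreover, if L is algebraic then [x, y] is algebraic, and if L is completely hereditarily atomic then [x, y] is completely hereditarily atomic. -/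
/-- The orthocomplementation of the interval `[x, y]`: `z ↦ x ⊔ (zᶜ ⊓ y)`. -/
def intvCompl {α : Type*} [CompleteOML α] (x y z : α) : α := x ⊔ (zᶜ ⊓ y)

/-- `c` is a compact element of the interval `[x, y]` (whose suprema are given by
`T ↦ x ⊔ sSup T`). -/
def IntvCompact {α : Type*} [CompleteOML α] (x y c : α) : Prop :=
  c ∈ Set.Icc x y ∧ ∀ T : Set α, T ⊆ Set.Icc x y → c ≤ x ⊔ sSup T →
    ∃ F : Finset α, ↑F ⊆ T ∧ c ≤ x ⊔ sSup (↑F : Set α)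

/-- A complete subalgebra of the interval `[x, y]`: a subset of `[x, y]` closed under
the interval orthocomplementation and under the interval suprema and infima. -/
def IntvCompleteSub {α : Type*} [CompleteOML α] (x y : α) (S : Set α) : Prop :=
  S ⊆ Set.Icc x y ∧ (∀ z ∈ S, intvCompl x y z ∈ S) ∧
    (∀ T : Set α, T ⊆ S → x ⊔ sSup T ∈ S) ∧ (∀ T : Set α, T ⊆ S → y ⊓ sInf T ∈ S)

/-- A subset `S` of the interval `[x, y]` (a poset with least element `x`) is atomic. -/
def IntvAtomic {α : Type*} [CompleteOML α] (x : α) (S : Set α) : Prop :=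
  ∀ z ∈ S, z ≠ x → ∃ a ∈ S, a ≠ x ∧ (∀ s ∈ S, ¬ (x < s ∧ s < a)) ∧ a ≤ z

/-- A complete lattice is algebraic if every element is the supremum of the compact
elements below it. -/
def IsAlgebraicLattice (α : Type*) [CompleteLattice α] : Prop :=
  ∀ x : α, x = sSup {c : α | IsCompactElement c ∧ c ≤ x}

/-!
The lattice and orthocomplement axioms of `[x, y]` reduce to the orthomodular law and its dual
`b ⊓ (bᶜ ⊔ a) = a` (for `a ≤ b`). If `d ≤ y` is compact in `L`, then `x ⊔ d` is compact in
`[x, y]`, so algebraicity of `L` passes to `[x, y]`.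

For complete hereditary atomicity, `s ↦ xᶜ ⊓ s` is an isomorphism of `[x, y]` onto `[⊥, m]`,
`m = xᶜ ⊓ y`, with inverse `q ↦ x ⊔ q`. A complete subalgebra `S` of `[⊥, m]` need not be one of
`L`, but `S ∪ {q ⊔ mᶜ | q ∈ S}` is: the complement of `q ∈ S` is `(m ⊓ qᶜ) ⊔ mᶜ` by
orthomodularity. An atom of this larger subalgebra lying below `m` is an atom of `S`.
-/

open Set

theorem sup_sSup_image_sup {β : Type*} [CompleteLattice β] (a : β) (T : Set β) :
    a ⊔ sSup ((a ⊔ ·) '' T) = a ⊔ sSup T :=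
  le_antisymm (sup_le le_sup_left (sSup_le (image_subset_iff.mpr fun _ ht =>
      sup_le_sup_left (le_sSup ht) _)))
    (sup_le_sup_left (sSup_le fun _ ht => le_sup_right.trans (le_sSup (mem_image_of_mem _ ht))) _)

namespace CompleteOML

variable {α : Type*} [CompleteOML α] {a b x y z w : α}

theorem compl_le_compl_s8 (h : a ≤ b) : bᶜ ≤ aᶜ := compl_antitone a b h

theorem le_compl_of_le_compl (h : a ≤ bᶜ) : b ≤ aᶜ := by
  simpa only [CompleteOML.compl_compl] using compl_le_compl_s8 h

theorem compl_sup (a b : α) : (a ⊔ b)ᶜ = aᶜ ⊓ bᶜ :=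
  le_antisymm (le_inf (compl_le_compl_s8 le_sup_left) (compl_le_compl_s8 le_sup_right))
    (le_compl_of_le_compl <|
      sup_le (le_compl_of_le_compl inf_le_left) (le_compl_of_le_compl inf_le_right))

theorem compl_inf (a b : α) : (a ⊓ b)ᶜ = aᶜ ⊔ bᶜ := by
  rw [← CompleteOML.compl_compl (aᶜ ⊔ bᶜ), compl_sup, CompleteOML.compl_compl,
    CompleteOML.compl_compl]

theorem inf_compl_sup_of_le (h : a ≤ b) : b ⊓ (bᶜ ⊔ a) = a := by
  simpa only [compl_sup, compl_inf, CompleteOML.compl_compl] using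
    congrArg (·ᶜ) (orthomodular _ _ (compl_le_compl_s8 h))

theorem compl_inf_sup_of_le_compl (h : b ≤ aᶜ) : aᶜ ⊓ (a ⊔ b) = b := by
  simpa only [CompleteOML.compl_compl] using inf_compl_sup_of_le h

theorem eq_bot_of_le_of_le_compl (ha : b ≤ a) (hac : b ≤ aᶜ) : b = ⊥ :=
  le_bot_iff.mp (inf_compl a ▸ le_inf ha hac)

theorem sInf_eq_compl_sSup_compl (U : Set α) : sInf U = (sSup (compl '' U))ᶜ :=
  le_antisymm
    (le_compl_of_le_compl <| sSup_le <| by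
      rintro _ ⟨u, hu, rfl⟩
      exact le_compl_of_le_compl ((sInf_le hu).trans (CompleteOML.compl_compl u).ge))
    (le_sInf fun u hu => by
      simpa only [CompleteOML.compl_compl] using
        compl_le_compl_s8 (le_sSup (mem_image_of_mem compl hu)))

theorem sup_sSup_isLUB_Icc (hxy : x ≤ y) {T : Set α} (hT : T ⊆ Icc x y) :
    x ⊔ sSup T ∈ Icc x y ∧ (∀ t ∈ T, t ≤ x ⊔ sSup T) ∧
      ∀ u ∈ Icc x y, (∀ t ∈ T, t ≤ u) → x ⊔ sSup T ≤ u :=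
  ⟨⟨le_sup_left, sup_le hxy (sSup_le fun _ ht => (hT ht).2)⟩,
    fun _ ht => (le_sSup ht).trans le_sup_right, fun _ hu hub => sup_le hu.1 (sSup_le hub)⟩

theorem inf_sInf_isGLB_Icc (hxy : x ≤ y) {T : Set α} (hT : T ⊆ Icc x y) :
    y ⊓ sInf T ∈ Icc x y ∧ (∀ t ∈ T, y ⊓ sInf T ≤ t) ∧
      ∀ u ∈ Icc x y, (∀ t ∈ T, u ≤ t) → u ≤ y ⊓ sInf T :=
  ⟨⟨le_inf hxy (le_sInf fun _ ht => (hT ht).1), inf_le_left⟩,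
    fun _ ht => inf_le_right.trans (sInf_le ht), fun _ hu hlb => le_inf hu.2 (le_sInf hlb)⟩

theorem intvCompl_mem_Icc (hxy : x ≤ y) (z : α) : intvCompl x y z ∈ Icc x y :=
  ⟨le_sup_left, sup_le hxy inf_le_right⟩

theorem intvCompl_intvCompl (hz : z ∈ Icc x y) : intvCompl x y (intvCompl x y z) = z := by
  have hdual : xᶜ ⊓ (z ⊔ yᶜ) ⊓ y = xᶜ ⊓ z := by
    rw [inf_assoc, inf_comm _ y, sup_comm, inf_compl_sup_of_le hz.2]
  rw [intvCompl, intvCompl, compl_sup, compl_inf, CompleteOML.compl_compl, hdual,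
    orthomodular _ _ hz.1]

theorem intvCompl_anti (h : z ≤ w) : intvCompl x y w ≤ intvCompl x y z :=
  sup_le_sup_left (inf_le_inf_right _ (compl_le_compl_s8 h)) _

theorem inf_intvCompl (hz : z ∈ Icc x y) : z ⊓ intvCompl x y z = x :=
  le_antisymm
    (calc z ⊓ intvCompl x y z ≤ z ⊓ (zᶜ ⊔ x) :=
          inf_le_inf_left _ (sup_le le_sup_right (inf_le_left.trans le_sup_left))
      _ = x := inf_compl_sup_of_le hz.1)
    (le_inf hz.1 le_sup_left)

theorem sup_intvCompl (hxy : x ≤ y) (hz : z ∈ Icc x y) : z ⊔ intvCompl x y z = y := by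
  rw [intvCompl, ← sup_assoc, sup_comm z x, sup_assoc, orthomodular _ _ hz.2,
    sup_eq_right.mpr hxy]

theorem sup_intvCompl_inf_of_le (hwy : w ≤ y) (hzw : z ≤ w) : z ⊔ (intvCompl x y z ⊓ w) = w :=
  le_antisymm (sup_le hzw inf_le_right) <|
    calc w = z ⊔ (zᶜ ⊓ w) := (orthomodular _ _ hzw).symm
      _ ≤ z ⊔ (intvCompl x y z ⊓ w) :=
        sup_le_sup_left (le_inf ((inf_le_inf_left _ hwy).trans le_sup_right) inf_le_right) _

theorem intvCompact_sup (hxy : x ≤ y) {d : α} (hd : IsCompactElement d) (hdy : d ≤ y) :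
    IntvCompact x y (x ⊔ d) := by
  classical
  refine ⟨⟨le_sup_left, sup_le hxy hdy⟩, fun T _ hle => ?_⟩
  have hdT : d ≤ sSup (insert x T) := sSup_insert (a := x) ▸ le_sup_right.trans hle
  obtain ⟨t, htT, hdt⟩ :=
    (CompleteLattice.isCompactElement_iff_exists_le_sSup_of_le_sSup α d).mp hd _ hdT
  refine ⟨t.erase x, fun w hw => ?_, sup_le le_sup_left (hdt.trans (Finset.sup_le fun w hw => ?_))⟩
  · rw [Finset.coe_erase] at hw
    exact (htT hw.1).resolve_left hw.2
  · by_cases hwx : w = x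
    · exact hwx ▸ le_sup_left
    · exact (le_sSup (Finset.mem_erase.mpr ⟨hwx, hw⟩)).trans le_sup_right

theorem eq_sup_sSup_intvCompact (halg : IsAlgebraicLattice α) (hxy : x ≤ y) (hz : z ∈ Icc x y) :
    z = x ⊔ sSup {c : α | IntvCompact x y c ∧ c ≤ z} := by
  refine le_antisymm ?_ (sup_le hz.1 (sSup_le fun _ hc => hc.2))
  rw [halg z]
  refine le_sup_of_le_right (sSup_le ?_)
  rintro d ⟨hd, hdz⟩
  have hdc : x ⊔ d ∈ {c : α | IntvCompact x y c ∧ c ≤ sSup {c | IsCompactElement c ∧ c ≤ z}} :=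
    ⟨intvCompact_sup hxy hd (hdz.trans hz.2), sup_le (halg z ▸ hz.1) (le_sSup ⟨hd, hdz⟩)⟩
  exact le_sup_right.trans (le_sSup hdc)

def IsCompleteSubalgebra (S : Set α) : Prop :=
  (∀ a ∈ S, aᶜ ∈ S) ∧ (∀ T : Set α, T ⊆ S → sSup T ∈ S) ∧ (∀ T : Set α, T ⊆ S → sInf T ∈ S)

variable (α) in
def CompletelyHereditarilyAtomic : Prop :=
  ∀ S : Set α, IsCompleteSubalgebra S → IntvAtomic ⊥ S

theorem isCompleteSubalgebra_of_compl_mem_of_sSup_mem {S : Set α} (hc : ∀ a ∈ S, aᶜ ∈ S)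
    (hs : ∀ T : Set α, T ⊆ S → sSup T ∈ S) : IsCompleteSubalgebra S :=
  ⟨hc, hs, fun T hT => sInf_eq_compl_sSup_compl T ▸
    hc _ (hs _ (image_subset_iff.mpr fun t ht => hc t (hT ht)))⟩

section Iic

variable {m : α} {S : Set α}

def extendByCompl (m : α) (S : Set α) : Set α := S ∪ (· ⊔ mᶜ) '' S

theorem compl_mem_extendByCompl (hSm : S ⊆ Iic m) (hc : ∀ q ∈ S, m ⊓ qᶜ ∈ S) :
    ∀ a ∈ extendByCompl m S, aᶜ ∈ extendByCompl m S := by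
  rintro q (hq | ⟨q, hq, rfl⟩)
  · have hqc : mᶜ ⊔ (m ⊓ qᶜ) = qᶜ := by
      simpa only [CompleteOML.compl_compl] using orthomodular _ _ (compl_le_compl_s8 (hSm hq))
    exact Or.inr ⟨_, hc _ hq, (sup_comm _ _).trans hqc⟩
  · dsimp only
    rw [compl_sup, CompleteOML.compl_compl, inf_comm]
    exact Or.inl (hc _ hq)

theorem inf_mem_and_le_inf_sup_compl (hSm : S ⊆ Iic m) {a : α} (ha : a ∈ extendByCompl m S) :
    m ⊓ a ∈ S ∧ a ≤ m ⊓ a ⊔ mᶜ := by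
  rcases ha with hq | ⟨q, hq, rfl⟩
  · rw [inf_eq_right.mpr (hSm hq)]
    exact ⟨hq, le_sup_left⟩
  · dsimp only
    rw [sup_comm q, inf_compl_sup_of_le (hSm hq), sup_comm]
    exact ⟨hq, le_rfl⟩

theorem sSup_mem_extendByCompl (hSm : S ⊆ Iic m) (hs : ∀ T : Set α, T ⊆ S → sSup T ∈ S)
    {U : Set α} (hU : U ⊆ extendByCompl m S) : sSup U ∈ extendByCompl m S := by
  by_cases hUS : U ⊆ S
  · exact Or.inl (hs U hUS)
  obtain ⟨u, hu, huS⟩ := not_subset.mp hUS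
  have hmu : mᶜ ≤ u := by
    obtain ⟨q, -, rfl⟩ := (hU hu).resolve_left huS
    exact le_sup_right
  have hU' : (m ⊓ ·) '' U ⊆ S :=
    image_subset_iff.mpr fun v hv => (inf_mem_and_le_inf_sup_compl hSm (hU hv)).1
  refine Or.inr ⟨_, hs _ hU', le_antisymm ?_ ?_⟩
  · exact sup_le (sSup_le (image_subset_iff.mpr fun v hv => inf_le_right.trans (le_sSup hv)))
      (hmu.trans (le_sSup hu))
  · exact sSup_le fun v hv => (inf_mem_and_le_inf_sup_compl hSm (hU hv)).2.trans
      (sup_le_sup_right (le_sSup (mem_image_of_mem _ hv)) _)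

theorem intvAtomic_bot_of_subset_Iic (H : CompletelyHereditarilyAtomic α) (hSm : S ⊆ Iic m)
    (hc : ∀ q ∈ S, m ⊓ qᶜ ∈ S) (hs : ∀ T : Set α, T ⊆ S → sSup T ∈ S) : IntvAtomic ⊥ S := by
  intro a ha ha0
  obtain ⟨b, hb, hb0, hbmin, hba⟩ := H _
    (isCompleteSubalgebra_of_compl_mem_of_sSup_mem (compl_mem_extendByCompl hSm hc)
      (fun _ => sSup_mem_extendByCompl hSm hs)) a (Or.inl ha) ha0
  have hbS : b ∈ S := by
    rcases hb with hb | ⟨q, hq, rfl⟩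
    · exact hb
    · have hm : mᶜ = ⊥ :=
        eq_bot_of_le_of_le_compl (le_sup_right.trans (hba.trans (hSm ha))) le_rfl
      simpa only [hm, sup_bot_eq] using hq
  exact ⟨b, hbS, hb0, fun s hs => hbmin s (Or.inl hs), hba⟩

end Iic

theorem intvAtomic_of_completelyHereditarilyAtomic (H : CompletelyHereditarilyAtomic α)
    {S : Set α} (hS : IntvCompleteSub x y S) : IntvAtomic x S := by
  obtain ⟨hSI, hc, hs, -⟩ := hS
  have hshift : IntvAtomic ⊥ {q | q ≤ xᶜ ⊓ y ∧ x ⊔ q ∈ S} := by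
    refine intvAtomic_bot_of_subset_Iic H (fun q hq => hq.1) (fun q hq => ⟨inf_le_left, ?_⟩)
      (fun T hT => ⟨sSup_le fun q hq => (hT hq).1, ?_⟩)
    · convert hc _ hq.2 using 1
      rw [intvCompl, compl_sup]
      ac_rfl
    · rw [← sup_sSup_image_sup]
      exact hs _ (image_subset_iff.mpr fun q hq => (hT hq).2)
  have hmem : ∀ s ∈ S, xᶜ ⊓ s ≤ xᶜ ⊓ y ∧ x ⊔ (xᶜ ⊓ s) ∈ S := fun s hs =>
    ⟨inf_le_inf_left _ (hSI hs).2, (orthomodular _ _ (hSI hs).1).symm ▸ hs⟩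
  have hne : ∀ s ∈ S, s ≠ x → xᶜ ⊓ s ≠ ⊥ := fun s hs hsx h =>
    hsx (by rw [← orthomodular _ _ (hSI hs).1, h, sup_bot_eq])
  intro z hz hzx
  obtain ⟨b, ⟨hbm, hbS⟩, hb0, hbmin, hbz⟩ := hshift _ (hmem z hz) (hne z hz hzx)
  have hbx : b ≤ xᶜ := hbm.trans inf_le_left
  refine ⟨x ⊔ b, hbS, fun h => hb0 (eq_bot_of_le_of_le_compl (le_sup_right.trans h.le) hbx),
    fun s hs ⟨hxs, hsb⟩ => hbmin _ (hmem s hs) ⟨bot_lt_iff_ne_bot.mpr (hne s hs hxs.ne'), ?_⟩,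
    sup_le (hSI hz).1 (hbz.trans inf_le_right)⟩
  refine lt_of_le_of_ne (compl_inf_sup_of_le_compl hbx ▸ inf_le_inf_left _ hsb.le) fun h => ?_
  exact hsb.ne (by rw [← orthomodular _ _ (hSI hs).1, h])

end CompleteOML

/-- for `x ≤ y` in a complete OML `L`, the interval `[x, y]` with the
induced order and the orthocomplementation `z ↦ x ⊔ (zᶜ ⊓ y)` is a complete OML
(suprema in the interval are given by `T ↦ x ⊔ sSup T` and infima by `T ↦ y ⊓ sInf T`);
moreover if `L` is algebraic then so is `[x, y]`, and if `L` is completely hereditarily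
atomic then so is `[x, y]`. -/
theorem interval_completeOML {α : Type*} [CompleteOML α] (x y : α) (hxy : x ≤ y) :
    -- [x, y] is a complete lattice: x ⊔ sSup T is the least upper bound of T in [x, y]
    (∀ T : Set α, T ⊆ Set.Icc x y → x ⊔ sSup T ∈ Set.Icc x y ∧
      (∀ t ∈ T, t ≤ x ⊔ sSup T) ∧ ∀ u ∈ Set.Icc x y, (∀ t ∈ T, t ≤ u) → x ⊔ sSup T ≤ u) ∧
    -- and y ⊓ sInf T is the greatest lower bound of T in [x, y]
    (∀ T : Set α, T ⊆ Set.Icc x y → y ⊓ sInf T ∈ Set.Icc x y ∧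
      (∀ t ∈ T, y ⊓ sInf T ≤ t) ∧ ∀ u ∈ Set.Icc x y, (∀ t ∈ T, u ≤ t) → u ≤ y ⊓ sInf T) ∧
    -- z ↦ x ⊔ (zᶜ ⊓ y) is an orthocomplementation of [x, y]
    (∀ z ∈ Set.Icc x y, intvCompl x y z ∈ Set.Icc x y) ∧
    (∀ z ∈ Set.Icc x y, intvCompl x y (intvCompl x y z) = z) ∧
    (∀ z ∈ Set.Icc x y, ∀ w ∈ Set.Icc x y, z ≤ w → intvCompl x y w ≤ intvCompl x y z) ∧
    (∀ z ∈ Set.Icc x y, z ⊓ intvCompl x y z = x) ∧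
    (∀ z ∈ Set.Icc x y, z ⊔ intvCompl x y z = y) ∧
    -- the orthomodular law holds in [x, y]
    (∀ z ∈ Set.Icc x y, ∀ w ∈ Set.Icc x y, z ≤ w → z ⊔ (intvCompl x y z ⊓ w) = w) ∧
    -- if L is algebraic then [x, y] is algebraic
    (IsAlgebraicLattice α →
      ∀ z ∈ Set.Icc x y, z = x ⊔ sSup {c : α | IntvCompact x y c ∧ c ≤ z}) ∧
    -- if L is completely hereditarily atomic then so is [x, y]
    ((∀ S : Set α, ((∀ a ∈ S, aᶜ ∈ S) ∧ (∀ T : Set α, T ⊆ S → sSup T ∈ S) ∧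
        (∀ T : Set α, T ⊆ S → sInf T ∈ S)) →
        ∀ a ∈ S, a ≠ ⊥ → ∃ b ∈ S, b ≠ ⊥ ∧ (∀ s ∈ S, ¬ (⊥ < s ∧ s < b)) ∧ b ≤ a) →
      ∀ S : Set α, IntvCompleteSub x y S → IntvAtomic x S) := by
  refine ⟨fun T hT => CompleteOML.sup_sSup_isLUB_Icc hxy hT,
    fun T hT => CompleteOML.inf_sInf_isGLB_Icc hxy hT,
    fun z _ => CompleteOML.intvCompl_mem_Icc hxy z,
    fun z hz => CompleteOML.intvCompl_intvCompl hz,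
    fun z _ w _ hzw => CompleteOML.intvCompl_anti hzw,
    fun z hz => CompleteOML.inf_intvCompl hz,
    fun z hz => CompleteOML.sup_intvCompl hxy hz,
    fun z _ w hw hzw => CompleteOML.sup_intvCompl_inf_of_le hw.2 hzw,
    fun halg z hz => CompleteOML.eq_sup_sSup_intvCompact halg hxy hz,
    fun H S hS => CompleteOML.intvAtomic_of_completelyHereditarilyAtomic H hS⟩
end

section
/- Every atomic OML is strongly atomic: if L is an atomic OML, then for all x, z ∈ L with x < z there exists a ∈ L with x ⋖ a ≤ z; that is, every interval of L is atomic. -/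
/-!
If `x < z`, orthomodularity `x ⊔ (xᶜ ⊓ z) = z` forces `xᶜ ⊓ z ≠ ⊥`, so atomicity gives an atom
`p ≤ xᶜ ⊓ z`. Then `x ⋖ x ⊔ p ≤ z`: any `b` with `x ≤ b ≤ x ⊔ p` equals `x ⊔ (xᶜ ⊓ b)`, and
`xᶜ ⊓ b ≤ xᶜ ⊓ (x ⊔ p) = p`, so `xᶜ ⊓ b` is `⊥` or `p`.
-/

/-- An orthomodular lattice. -/
class OML (α : Type*) extends Lattice α, BoundedOrder α, Compl α where
  compl_compl : ∀ x : α, xᶜᶜ = x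
  compl_antitone : ∀ x y : α, x ≤ y → yᶜ ≤ xᶜ
  inf_compl : ∀ x : α, x ⊓ xᶜ = ⊥
  sup_compl : ∀ x : α, x ⊔ xᶜ = ⊤
  orthomodular : ∀ x y : α, x ≤ y → x ⊔ (xᶜ ⊓ y) = y

namespace OML

variable {α : Type*} [OML α] {x y p : α}

theorem le_compl_comm : x ≤ yᶜ ↔ y ≤ xᶜ :=
  ⟨fun h => compl_compl y ▸ compl_antitone x yᶜ h,
    fun h => compl_compl x ▸ compl_antitone y xᶜ h⟩

theorem compl_sup_eq_compl_inf_compl : (x ⊔ y)ᶜ = xᶜ ⊓ yᶜ := by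
  refine le_antisymm
    (le_inf (compl_antitone _ _ le_sup_left) (compl_antitone _ _ le_sup_right)) ?_
  refine le_compl_comm.mp (sup_le ?_ ?_)
  · exact le_compl_comm.mp inf_le_left
  · exact le_compl_comm.mp inf_le_right

theorem eq_of_le_of_compl_inf_eq_bot (hxy : x ≤ y) (h : xᶜ ⊓ y = ⊥) : x = y := by
  simpa only [h, sup_bot_eq] using orthomodular x y hxy

theorem compl_inf_ne_bot_of_lt (hxy : x < y) : xᶜ ⊓ y ≠ ⊥ :=
  fun h => hxy.ne (eq_of_le_of_compl_inf_eq_bot hxy.le h)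

theorem compl_inf_sup_eq_of_le_compl (hp : p ≤ xᶜ) : xᶜ ⊓ (x ⊔ p) = p := by
  symm
  refine eq_of_le_of_compl_inf_eq_bot (le_inf hp le_sup_right) ?_
  calc pᶜ ⊓ (xᶜ ⊓ (x ⊔ p)) = (xᶜ ⊓ pᶜ) ⊓ (x ⊔ p) := by rw [inf_left_comm, inf_assoc]
    _ = (x ⊔ p)ᶜ ⊓ (x ⊔ p) := by rw [compl_sup_eq_compl_inf_compl]
    _ = ⊥ := by rw [inf_comm, inf_compl]

theorem covBy_sup_of_isAtom_of_le_compl (hp : IsAtom p) (hpx : p ≤ xᶜ) : x ⋖ x ⊔ p := by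
  have hp_not_le : ¬ p ≤ x := fun h =>
    hp.1 (eq_bot_iff.mpr ((le_inf h hpx).trans (inf_compl x).le))
  refine ⟨left_lt_sup.mpr hp_not_le, fun b hxb hbp => ?_⟩
  have hb : x ⊔ (xᶜ ⊓ b) = b := orthomodular x b hxb.le
  have hle : xᶜ ⊓ b ≤ p :=
    compl_inf_sup_eq_of_le_compl hpx ▸ inf_le_inf_left _ hbp.le
  rcases hp.le_iff.mp hle with hbot | htop
  · rw [hbot, sup_bot_eq] at hb
    exact hxb.ne hb
  · rw [htop] at hb
    exact hbp.ne hb.symm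

end OML

/-- every atomic OML is strongly atomic: every interval of it is atomic. -/
theorem atomic_OML_stronglyAtomic {α : Type*} [OML α]
    (hat : ∀ x : α, x ≠ ⊥ → ∃ a : α, IsAtom a ∧ a ≤ x) :
    ∀ x z : α, x < z → ∃ a : α, x ⋖ a ∧ a ≤ z := by
  intro x z hxz
  obtain ⟨p, hp, hpxz⟩ := hat _ (OML.compl_inf_ne_bot_of_lt hxz)
  exact ⟨x ⊔ p, OML.covBy_sup_of_isAtom_of_le_compl hp (hpxz.trans inf_le_left),
    sup_le hxz.le (hpxz.trans inf_le_right)⟩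
end
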